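/- Let L be a visibly pushdown language under oracle tagging t_O with finitely many syntactic congruence classes, and let t be a tagging compatible with L. Then there exists a positive integer N_t such that for every string s over Σ, if t(s) is well-matched and there exist strings w, w' with w s w' ∈ L, then t_O(s) contains at most N_t unmatched call and return symbols. -/
import Mathlib


namespace VStar

inductive Kind : Type
  | plain | call | ret
deriving DecidableEq

variable {α : Type}

/-- Well-matched strings with respect to a tagging. -/
inductive WellMatched (t : α → Kind) : List α → Prop
  | nil : WellMatched t []
  | plain {c : α} {s : List α} : t c = Kind.plain → WellMatched t s →
      WellMatched t (c :: s)
  | nest {a b : α} {s1 s2 : List α} : t a = Kind.call → t b = Kind.ret →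
      WellMatched t s1 → WellMatched t s2 →
      WellMatched t (a :: s1 ++ b :: s2)

/-- Well-matched visibly pushdown grammars. -/
structure VPG (α N : Type) (t : α → Kind) where
  start : N
  peps : N → Prop
  pplain : N → α → N → Prop
  pmatch : N → α → N → α → N → Prop
  plain_ok : ∀ {L c L1}, pplain L c L1 → t c = Kind.plain
  match_ok : ∀ {L a L1 b L2}, pmatch L a L1 b L2 → t a = Kind.call ∧ t b = Kind.ret

inductive VPG.Derives {α N : Type} {t : α → Kind} (G : VPG α N t) : N → List α → Prop
  | eps {L} : G.peps L → G.Derives L []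
  | plain {L c L1 s} : G.pplain L c L1 → G.Derives L1 s → G.Derives L (c :: s)
  | nest {L a L1 b L2 s1 s2} : G.pmatch L a L1 b L2 →
      G.Derives L1 s1 → G.Derives L2 s2 → G.Derives L (a :: s1 ++ b :: s2)

def VPG.lang {α N : Type} {t : α → Kind} (G : VPG α N t) : Set (List α) :=
  {s | G.Derives G.start s}

/-- A language is a visibly pushdown language (for tagging `t`). -/
def IsVPL (t : α → Kind) (L : Set (List α)) : Prop :=
  ∃ (n : ℕ) (G : VPG α (Fin n) t), L = G.lang

/-- `lpow x k` is the concatenation of `k` copies of `x`. -/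
def lpow (x : List α) (k : ℕ) : List α := (List.replicate k x).flatten

/-- A nesting pattern of `s = u ++ x ++ z ++ y ++ v` with respect to language `L`. -/
def NestingPattern (L : Set (List α)) (u x z y v : List α) : Prop :=
  x ≠ [] ∧ y ≠ [] ∧
    (∀ k, 1 ≤ k → u ++ lpow x k ++ z ++ lpow y k ++ v ∈ L) ∧
    (∀ k j, k ≠ j → u ++ lpow x k ++ z ++ lpow y j ++ v ∉ L)

/-- `x` contains an occurrence of a call symbol with no matching return inside `x`. -/
def UnmatchedCallIn (t : α → Kind) (x : List α) : Prop :=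
  ∃ x1 a x2, x = x1 ++ a :: x2 ∧ t a = Kind.call ∧
    ¬ ∃ w b w', x2 = w ++ b :: w' ∧ t b = Kind.ret ∧ WellMatched t w

/-- `y` contains an occurrence of a return symbol with no matching call inside `y`. -/
def UnmatchedRetIn (t : α → Kind) (y : List α) : Prop :=
  ∃ y1 b y2, y = y1 ++ b :: y2 ∧ t b = Kind.ret ∧
    ¬ ∃ w a w', y1 = w ++ a :: w' ∧ t a = Kind.call ∧ WellMatched t w'

/-- A tagging is compatible with a nesting pattern `(x, y)`. -/
def PatternCompatible (t : α → Kind) (x y : List α) : Prop :=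
  UnmatchedCallIn t x ∧ UnmatchedRetIn t y

/-- Compatibility of a tagging with a set `S` of seed strings (patterns w.r.t. `L`). -/
def CompatibleWith (t : α → Kind) (L S : Set (List α)) : Prop :=
  (∀ s ∈ S, WellMatched t s) ∧
  ∀ u x z y v, (u ++ x ++ z ++ y ++ v) ∈ S → NestingPattern L u x z y v →
    PatternCompatible t x y

/-- Compatibility of a tagging with the whole language. -/
def Compatible (t : α → Kind) (L : Set (List α)) : Prop := CompatibleWith t L L

/-- Syntactic congruence with respect to `L`. -/
def SynCongr (L : Set (List α)) (s1 s2 : List α) : Prop :=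
  ∀ u v, u ++ s1 ++ v ∈ L ↔ u ++ s2 ++ v ∈ L

end VStar

namespace VStar

/-- One step of the left-to-right unmatched-symbol counter:
the state is `(unmatched returns so far, pending calls)`. -/
def umStep (t : α → Kind) (p : ℕ × ℕ) (a : α) : ℕ × ℕ :=
  match t a with
  | Kind.plain => p
  | Kind.call => (p.1, p.2 + 1)
  | Kind.ret => if p.2 = 0 then (p.1 + 1, 0) else (p.1, p.2 - 1)

/-- The number of unmatched call and return symbols of `s` under tagging `t`. -/
def unmatchedCount (t : α → Kind) (s : List α) : ℕ :=
  (s.foldl (umStep t) (0, 0)).1 + (s.foldl (umStep t) (0, 0)).2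

end VStar

namespace VStar

variable {α : Type}

variable {t : α → Kind}

def kv : Kind → ℤ
  | Kind.plain => 0
  | Kind.call => 1
  | Kind.ret => -1

lemma kv_ge (k : Kind) : -1 ≤ kv k := by cases k <;> simp [kv]
lemma kv_le (k : Kind) : kv k ≤ 1 := by cases k <;> simp [kv]

def bal (t : α → Kind) (s : List α) : ℤ := (s.map fun c => kv (t c)).sum

@[simp] lemma bal_nil : bal t ([] : List α) = 0 := rfl

@[simp] lemma bal_cons (c : α) (s : List α) : bal t (c :: s) = kv (t c) + bal t s := by
  simp [bal]

@[simp] lemma bal_append (x y : List α) : bal t (x ++ y) = bal t x + bal t y := by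
  simp [bal]

lemma wm_bal {s : List α} (h : WellMatched t s) : bal t s = 0 := by
  induction h with
  | nil => simp
  | plain hc _ ih => simp [kv, *]
  | nest ha hb _ _ ih1 ih2 => simp [kv, *]

lemma wm_append {x y : List α} (hx : WellMatched t x) (hy : WellMatched t y) :
    WellMatched t (x ++ y) := by
  induction hx with
  | nil => simpa
  | plain hc _ ih => exact WellMatched.plain hc ih
  | @nest a b s1 s2 ha hb h1 h2 ih1 ih2 =>
      have heq : (a :: s1 ++ b :: s2) ++ y = a :: s1 ++ b :: (s2 ++ y) := by simp
      rw [heq]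
      exact WellMatched.nest ha hb h1 ih2

lemma wm_prefix_bal {s : List α} (h : WellMatched t s) :
    ∀ p q : List α, s = p ++ q → 0 ≤ bal t p := by
  induction h with
  | nil =>
      intro p q hpq
      rcases List.append_eq_nil_iff.mp hpq.symm with ⟨rfl, rfl⟩
      simp
  | @plain c s hc _ ih =>
      intro p q hpq
      match p, hpq with
      | [], _ => simp
      | c' :: p', hpq =>
          rw [List.cons_append] at hpq
          injection hpq with h1 h2
          subst h1
          have := ih p' q h2
          simp [hc, kv]
          omega
  | @nest a b s1 s2 ha hb h1 h2 ih1 ih2 =>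
      intro p q hpq
      match p, hpq with
      | [], _ => simp
      | a' :: p', hpq =>
          rw [List.cons_append] at hpq
          injection hpq with e1 e2
          subst e1
          rcases List.append_eq_append_iff.mp e2.symm with ⟨m, hm1, hm2⟩ | ⟨m, hm1, hm2⟩
          · -- s1 = p' ++ m
            have := ih1 p' m hm1
            simp [ha, kv]
            omega
          · -- p' = s1 ++ m , b :: s2 = m ++ q
            subst hm1
            match m, hm2 with
            | [], _ =>
                simp [ha, kv, wm_bal h1]
            | b' :: m', hm2 =>
                injection hm2 with f1 f2
                subst f1
                have := ih2 m' q f2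
                simp [ha, hb, kv, wm_bal h1]
                omega

lemma wm_suffix_bal {s : List α} (h : WellMatched t s)
    (p q : List α) (hpq : s = p ++ q) : bal t q ≤ 0 := by
  have h0 := wm_bal h
  have h1 := wm_prefix_bal h p q hpq
  rw [hpq] at h0
  simp at h0
  omega

lemma take_of_append {p q s : List α} (h : s = p ++ q) : p = s.take p.length := by
  subst h; simp

/-- Dyck characterization: nonnegative prefixes + zero balance implies well-matched. -/
lemma bal_wm : ∀ (n : ℕ) (s : List α), s.length ≤ n → bal t s = 0 →
    (∀ p q : List α, s = p ++ q → 0 ≤ bal t p) → WellMatched t s := by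
  intro n
  induction n with
  | zero =>
      intro s hlen _ _
      have : s = [] := List.length_eq_zero_iff.mp (Nat.le_zero.mp hlen)
      subst this; exact WellMatched.nil
  | succ n ih =>
      intro s hlen hbal hpre
      match s with
      | [] => exact WellMatched.nil
      | c :: s' =>
        cases hk : t c with
        | plain =>
            apply WellMatched.plain hk
            apply ih s' (by simpa using Nat.lt_succ_iff.mp (Nat.lt_of_lt_of_le (by simp) hlen))
            · have := hbal; simp [hk, kv] at this; exact this
            · intro p q hpq
              have := hpre (c :: p) q (by simp [hpq])
              simp [hk, kv] at this; exact this
        | ret =>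
            exfalso
            have := hpre [c] s' rfl
            simp [hk, kv] at this
        | call =>
            -- find minimal j with bal (take j s') = -1
            have hbal' : bal t s' = -1 := by simp [hk, kv] at hbal; omega
            have hex : ∃ j, bal t (s'.take j) = -1 :=
              ⟨s'.length, by simpa using hbal'⟩
            classical
            let j := Nat.find hex
            have hj : bal t (s'.take j) = -1 := Nat.find_spec hex
            have hjmin : ∀ i < j, bal t (s'.take i) ≠ -1 := fun i hi => Nat.find_min hex hi
            have hjpos : 1 ≤ j := by
              by_contra h
              have : j = 0 := by omega
              rw [this] at hj; simp at hj
            have hjle : j ≤ s'.length := by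
              by_contra h
              push_neg at h
              exact hjmin s'.length h (by simpa using hbal')
            -- prefixes of s' below j have nonneg balance
            have hprefnn : ∀ i ≤ j - 1, 0 ≤ bal t (s'.take i) := by
              intro i hi
              have h1 := hpre (c :: s'.take i) (s'.drop i) (by simp)
              simp [hk, kv] at h1
              have h2 := hjmin i (by omega)
              omega
            have hj1lt : j - 1 < s'.length := by omega
            set b := s'.get ⟨j - 1, hj1lt⟩ with hbdef
            have htake : s'.take j = s'.take (j - 1) ++ [b] := by
              have : j = (j - 1) + 1 := by omega
              rw [this, List.take_succ]
              congr 1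
              have hgb : s'[j-1] = b := rfl
              simp [List.getElem?_eq_getElem hj1lt, hgb]
            have hbalb : bal t (s'.take (j-1)) + kv (t b) = -1 := by
              rw [htake] at hj; simp at hj; omega
            have hb1 : 0 ≤ bal t (s'.take (j-1)) := hprefnn (j-1) le_rfl
            have hkb : kv (t b) = -1 ∧ bal t (s'.take (j-1)) = 0 := by
              have := kv_ge (t b); omega
            have hbret : t b = Kind.ret := by
              cases hbb : t b
              · rw [hbb] at hkb; simp [kv] at hkb
              · rw [hbb] at hkb; simp [kv] at hkb
              · rfl
            have hsplit : s' = s'.take (j-1) ++ b :: s'.drop j := by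
              conv_lhs => rw [← List.take_append_drop j s']
              rw [htake]; simp
            have hwm1 : WellMatched t (s'.take (j-1)) := by
              apply ih _ (by
                have : (s'.take (j-1)).length ≤ s'.length := by simp
                have hs'len : s'.length ≤ n := by simpa using Nat.succ_le_succ_iff.mp hlen
                omega) hkb.2
              intro p q hpq
              have hlp : p.length ≤ j - 1 := by
                have := congrArg List.length hpq
                simp at this; omega
              have : p = (s'.take (j-1)).take p.length := take_of_append hpq
              rw [List.take_take] at this
              have hmin : min p.length (j-1) = p.length := by omega
              rw [hmin] at this
              rw [this]
              exact hprefnn p.length (by omega)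
            have hwm2 : WellMatched t (s'.drop j) := by
              apply ih _ (by
                have : (s'.drop j).length = s'.length - j := by simp
                have hs'len : s'.length ≤ n := by simpa using Nat.succ_le_succ_iff.mp hlen
                omega)
              · have : bal t (s'.take j) + bal t (s'.drop j) = bal t s' := by
                  rw [← bal_append, List.take_append_drop]
                omega
              · intro p q hpq
                have h1 := hpre (c :: (s'.take j ++ p)) q (by
                  simp only [List.cons_append, List.append_assoc]
                  rw [← hpq, List.take_append_drop])
                simp [hk, kv] at h1
                omega
            have : c :: s' = c :: s'.take (j-1) ++ b :: s'.drop j := by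
              rw [List.cons_append, ← hsplit]
            rw [this]
            exact WellMatched.nest hk hbret hwm1 hwm2

lemma wm_of_bal_pref {s : List α} (hbal : bal t s = 0)
    (hpre : ∀ p q : List α, s = p ++ q → 0 ≤ bal t p) : WellMatched t s :=
  bal_wm s.length s le_rfl hbal hpre


lemma wm_rotation {x : List α} (hbal : bal t x = 0) :
    ∃ x1 x2, x = x1 ++ x2 ∧ WellMatched t (x2 ++ x1) := by
  classical
  obtain ⟨n, hn, hmin⟩ := (Finset.range (x.length + 1)).exists_min_image
    (fun i => bal t (x.take i)) ⟨0, by simp⟩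
  simp only [Finset.mem_range] at hn hmin
  have hnle : n ≤ x.length := by omega
  refine ⟨x.take n, x.drop n, (List.take_append_drop n x).symm, ?_⟩
  have hsum : bal t (x.take n) + bal t (x.drop n) = 0 := by
    rw [← bal_append, List.take_append_drop]; exact hbal
  apply wm_of_bal_pref
  · simp; omega
  · intro p q hpq
    rcases List.append_eq_append_iff.mp hpq.symm with ⟨m, hm1, hm2⟩ | ⟨m, hm1, hm2⟩
    · -- x.drop n = p ++ m , x.take n = m ++ q  (orientation to check)
      have h1 : x.take (n + p.length) = x.take n ++ p := by
        rw [List.take_add]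
        congr 1
        rw [hm1]
        exact List.take_left' rfl
      have hlen : n + p.length ≤ x.length := by
        have := congrArg List.length (List.take_append_drop n x)
        have h2 := congrArg List.length hm1
        simp at this h2
        omega
      have h3 := hmin (n + p.length) (by omega)
      have h4 : bal t (x.take (n + p.length)) = bal t (x.take n) + bal t p := by
        rw [h1]; simp
      omega
    · -- p = x.drop n ++ m , x.take n = m ++ q
      have hmq : x.take n = m ++ q := hm2
      have hmlen : m.length ≤ n := by
        have := congrArg List.length hmq
        simp at this
        omega
      have h1 : x.take m.length = m := by
        have h2 : (x.take n).take m.length = m := by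
          rw [hmq]; exact List.take_left' rfl
        rw [List.take_take, min_eq_left hmlen] at h2
        exact h2
      have h3 := hmin m.length (by omega)
      rw [h1] at h3
      have h4 : bal t p = bal t (x.drop n) + bal t m := by rw [hm1]; simp
      omega

lemma wm_matched_call {s : List α} (h : WellMatched t s) :
    ∀ x1 a x2, s = x1 ++ a :: x2 → t a = Kind.call →
    ∃ w b w', x2 = w ++ b :: w' ∧ t b = Kind.ret ∧ WellMatched t w := by
  induction h with
  | nil => intro x1 a x2 he _; simp at he
  | @plain c s hc _ ih =>
      intro x1 a x2 he ha
      match x1, he with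
      | [], he =>
          injection he with e1 e2
          subst e1
          rw [ha] at hc; cases hc
      | c' :: x1', he =>
          rw [List.cons_append] at he
          injection he with e1 e2
          exact ih x1' a x2 e2 ha
  | @nest a0 b0 s1 s2 ha0 hb0 h1 h2 ih1 ih2 =>
      intro x1 a x2 he ha
      match x1, he with
      | [], he =>
          injection he with e1 e2
          subst e1
          exact ⟨s1, b0, s2, e2.symm, hb0, h1⟩
      | a' :: x1', he =>
          rw [List.cons_append] at he
          injection he with e1 e2
          rcases List.append_eq_append_iff.mp e2 with ⟨m, hm1, hm2⟩ | ⟨m, hm1, hm2⟩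
          · -- x1' = s1 ++ m ∧ b0 :: s2 = m ++ a :: x2
            match m, hm2 with
            | [], hm2 =>
                injection hm2 with f1 f2
                rw [← f1] at ha; rw [ha] at hb0; cases hb0
            | b' :: m', hm2 =>
                injection hm2 with f1 f2
                exact ih2 m' a x2 f2 ha
          · -- s1 = x1' ++ m ∧ a :: x2 = m ++ b0 :: s2
            match m, hm2 with
            | [], hm2 =>
                injection hm2 with f1 f2
                rw [← f1] at hb0; rw [ha] at hb0; cases hb0
            | a'' :: m', hm2 =>
                injection hm2 with f1 f2
                subst f1
                obtain ⟨w, b, w', hw1, hw2, hw3⟩ := ih1 x1' a m' hm1 ha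
                exact ⟨w, b, w' ++ b0 :: s2, by rw [f2, hw1]; simp, hw2, hw3⟩

lemma wm_matched_ret {s : List α} (h : WellMatched t s) :
    ∀ y1 b y2, s = y1 ++ b :: y2 → t b = Kind.ret →
    ∃ w a w', y1 = w ++ a :: w' ∧ t a = Kind.call ∧ WellMatched t w' := by
  induction h with
  | nil => intro y1 b y2 he _; simp at he
  | @plain c s hc _ ih =>
      intro y1 b y2 he hb
      match y1, he with
      | [], he =>
          injection he with e1 e2
          subst e1
          rw [hb] at hc; cases hc
      | c' :: y1', he =>
          rw [List.cons_append] at he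
          injection he with e1 e2
          obtain ⟨w, a, w', hw1, hw2, hw3⟩ := ih y1' b y2 e2 hb
          exact ⟨c' :: w, a, w', by rw [hw1]; simp, hw2, hw3⟩
  | @nest a0 b0 s1 s2 ha0 hb0 h1 h2 ih1 ih2 =>
      intro y1 b y2 he hb
      match y1, he with
      | [], he =>
          injection he with e1 e2
          subst e1
          rw [hb] at ha0; cases ha0
      | a' :: y1', he =>
          rw [List.cons_append] at he
          injection he with e1 e2
          rcases List.append_eq_append_iff.mp e2 with ⟨m, hm1, hm2⟩ | ⟨m, hm1, hm2⟩
          · -- y1' = s1 ++ m ∧ b0 :: s2 = m ++ b :: y2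
            match m, hm2 with
            | [], hm2 =>
                injection hm2 with f1 f2
                exact ⟨[], a0, s1, by rw [← e1]; simp [hm1], ha0, h1⟩
            | b' :: m', hm2 =>
                injection hm2 with f1 f2
                subst f1
                obtain ⟨w, a, w', hw1, hw2, hw3⟩ := ih2 m' b y2 f2 hb
                exact ⟨a0 :: s1 ++ b0 :: w, a, w', by rw [← e1, hm1, hw1]; simp, hw2, hw3⟩
          · -- s1 = y1' ++ m ∧ b :: y2 = m ++ b0 :: s2
            match m, hm2 with
            | [], hm2 =>
                injection hm2 with f1 f2
                have hs1 : s1 = y1' := by simpa using hm1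
                refine ⟨[], a0, y1', by rw [← e1]; simp, ha0, ?_⟩
                rwa [hs1] at h1
            | b'' :: m', hm2 =>
                injection hm2 with f1 f2
                subst f1
                obtain ⟨w, a, w', hw1, hw2, hw3⟩ := ih1 y1' b m' hm1 hb
                exact ⟨a0 :: w, a, w', by rw [← e1, hw1]; simp, hw2, hw3⟩

lemma wm_not_unmatchedCallIn {x : List α} (h : WellMatched t x) :
    ¬ UnmatchedCallIn t x := by
  rintro ⟨x1, a, x2, he, ha, hn⟩
  exact hn (wm_matched_call h x1 a x2 he ha)

lemma wm_not_unmatchedRetIn {y : List α} (h : WellMatched t y) :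
    ¬ UnmatchedRetIn t y := by
  rintro ⟨y1, b, y2, he, hb, hn⟩
  exact hn (wm_matched_ret h y1 b y2 he hb)

/-! ### Level decomposition machinery -/

structure Lv (α : Type) where
  a : α
  e : List α
  g : List α
  b : α

def buildH : List (Lv α) → List α
  | [] => []
  | l :: r => l.a :: l.e ++ buildH r

def buildY : List (Lv α) → List α
  | [] => []
  | l :: r => buildY r ++ l.g ++ [l.b]

def buildV : List (Lv α) → List α
  | [] => []
  | l :: r => l.a :: l.e ++ buildV r ++ l.g ++ [l.b]

def LvOK (t : α → Kind) (l : Lv α) : Prop :=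
  t l.a = Kind.call ∧ t l.b = Kind.ret ∧ WellMatched t l.e ∧ WellMatched t l.g

@[simp] lemma buildH_nil : buildH ([] : List (Lv α)) = [] := rfl
@[simp] lemma buildY_nil : buildY ([] : List (Lv α)) = [] := rfl
@[simp] lemma buildV_nil : buildV ([] : List (Lv α)) = [] := rfl
lemma buildH_cons (l : Lv α) (r) : buildH (l :: r) = l.a :: l.e ++ buildH r := rfl
lemma buildY_cons (l : Lv α) (r) : buildY (l :: r) = buildY r ++ l.g ++ [l.b] := rfl
lemma buildV_cons (l : Lv α) (r) : buildV (l :: r) = l.a :: l.e ++ buildV r ++ l.g ++ [l.b] := rfl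

lemma buildH_append (A B : List (Lv α)) : buildH (A ++ B) = buildH A ++ buildH B := by
  induction A with
  | nil => simp
  | cons l r ih => simp [buildH_cons, ih]

lemma buildY_append (A B : List (Lv α)) : buildY (A ++ B) = buildY B ++ buildY A := by
  induction A with
  | nil => simp
  | cons l r ih => simp [buildY_cons, ih]

lemma buildV_eq (ls : List (Lv α)) : buildV ls = buildH ls ++ buildY ls := by
  induction ls with
  | nil => simp
  | cons l r ih => simp [buildV_cons, buildH_cons, buildY_cons, ih]

lemma buildV_split (A B : List (Lv α)) :
    buildV (A ++ B) = buildH A ++ buildV B ++ buildY A := by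
  induction A with
  | nil => simp
  | cons l r ih => simp [buildV_cons, buildH_cons, buildY_cons, ih]

lemma wm_buildV {t : α → Kind} {ls : List (Lv α)} (h : ∀ l ∈ ls, LvOK t l) :
    WellMatched t (buildV ls) := by
  induction ls with
  | nil => exact WellMatched.nil
  | cons l r ih =>
      obtain ⟨ha, hb, he, hg⟩ := h l (by simp)
      have hr := ih (fun l hl => h l (by simp [hl]))
      have heq : buildV (l :: r) = l.a :: (l.e ++ buildV r ++ l.g) ++ l.b :: [] := by
        simp [buildV_cons]
      rw [heq]
      exact WellMatched.nest ha hb (wm_append (wm_append he hr) hg) WellMatched.nil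

/-- Key structural decomposition: splitting a well-matched string at any point. -/
lemma KR {t : α → Kind} {G : List α} (hG : WellMatched t G) :
    ∀ h h', G = h ++ h' →
    ∃ (d0 : List α) (ls : List (Lv α)) (rest : List α),
      h = d0 ++ buildH ls ∧ h' = buildY ls ++ rest ∧
      WellMatched t d0 ∧ WellMatched t rest ∧ ∀ l ∈ ls, LvOK t l := by
  induction hG with
  | nil =>
      intro h h' he
      rcases List.append_eq_nil_iff.mp he.symm with ⟨rfl, rfl⟩
      exact ⟨[], [], [], by simp, by simp, WellMatched.nil, WellMatched.nil, by simp⟩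
  | @plain c s hc hs ih =>
      intro h h' he
      match h, he with
      | [], he =>
          exact ⟨[], [], c :: s, by simp, by simpa using he.symm, WellMatched.nil,
            WellMatched.plain hc hs, by simp⟩
      | c' :: h1, he =>
          rw [List.cons_append] at he
          injection he with e1 e2
          obtain ⟨d0, ls, rest, H1, H2, H3, H4, H5⟩ := ih h1 h' e2
          exact ⟨c :: d0, ls, rest, by rw [← e1, H1]; simp, H2,
            WellMatched.plain hc H3, H4, H5⟩
  | @nest a b s1 s2 ha hb h1wm h2wm ih1 ih2 =>
      intro h h' he
      match h, he with
      | [], he =>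
          exact ⟨[], [], a :: s1 ++ b :: s2, by simp, by simpa using he.symm, WellMatched.nil,
            WellMatched.nest ha hb h1wm h2wm, by simp⟩
      | a' :: h1, he =>
          rw [List.cons_append] at he
          injection he with e1 e2
          rcases List.append_eq_append_iff.mp e2 with ⟨m, hm1, hm2⟩ | ⟨m, hm1, hm2⟩
          · -- h1 = s1 ++ m , b :: s2 = m ++ h'
            match m, hm2 with
            | [], hm2 =>
                have hs1 : s1 = h1 := by simpa using hm1.symm
                have hh' : h' = b :: s2 := by simpa using hm2.symm
                obtain ⟨d0, ls, rest1, H1, H2, H3, H4, H5⟩ := ih1 h1 [] (by simp [hs1])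
                have hls : buildY ls = [] := (List.append_eq_nil_iff.mp H2.symm).1
                have hr1 : rest1 = [] := (List.append_eq_nil_iff.mp H2.symm).2
                refine ⟨[], ⟨a, d0, rest1, b⟩ :: ls, s2, ?_, ?_, WellMatched.nil, h2wm, ?_⟩
                · rw [← e1, buildH_cons]; simp [H1]
                · rw [hh', buildY_cons, hls, hr1]; simp
                · intro l hl
                  rcases List.mem_cons.mp hl with rfl | hl
                  · exact ⟨ha, hb, H3, H4⟩
                  · exact H5 l hl
            | b' :: m2, hm2 =>
                injection hm2 with f1 f2
                obtain ⟨d0, ls, rest, H1, H2, H3, H4, H5⟩ := ih2 m2 h' f2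
                refine ⟨a :: s1 ++ b :: d0, ls, rest, ?_, H2, ?_, H4, H5⟩
                · rw [← e1, hm1, ← f1, H1]; simp
                · exact WellMatched.nest ha hb h1wm H3
          · -- s1 = h1 ++ m , h' = m ++ b :: s2
            obtain ⟨d0, ls, rest1, H1, H2, H3, H4, H5⟩ := ih1 h1 m hm1
            refine ⟨[], ⟨a, d0, rest1, b⟩ :: ls, s2, ?_, ?_, WellMatched.nil, h2wm, ?_⟩
            · rw [← e1, buildH_cons]; simp [H1]
            · rw [hm2, H2, buildY_cons]; simp
            · intro l hl
              rcases List.mem_cons.mp hl with rfl | hl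
              · exact ⟨ha, hb, H3, H4⟩
              · exact H5 l hl

/-! ### lpow, counter, derivations -/

lemma lpow_succ (x : List α) (k : ℕ) : lpow x (k+1) = x ++ lpow x k := by
  simp [lpow, List.replicate_succ]

@[simp] lemma lpow_zero (x : List α) : lpow x 0 = [] := rfl

@[simp] lemma lpow_one (x : List α) : lpow x 1 = x := by simp [lpow]

lemma bal_lpow {t : α → Kind} (x : List α) (k : ℕ) : bal t (lpow x k) = k * bal t x := by
  induction k with
  | zero => simp
  | succ k ih => rw [lpow_succ]; push_cast; simp [ih]; ring

lemma lpow_comm' : True := trivial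

lemma lpow_rot (x1 x2 : List α) (k : ℕ) :
    x1 ++ lpow (x2 ++ x1) k = lpow (x1 ++ x2) k ++ x1 := by
  induction k with
  | zero => simp
  | succ k ih =>
      rw [lpow_succ, lpow_succ]
      simp only [List.append_assoc]
      rw [ih]

lemma foldl_umStep_wm {t : α → Kind} {s : List α} (h : WellMatched t s) :
    ∀ p : ℕ × ℕ, s.foldl (umStep t) p = p := by
  induction h with
  | nil => intro p; rfl
  | @plain c s hc _ ih => intro p; simp [List.foldl_cons, umStep, hc, ih]
  | @nest a b s1 s2 ha hb _ _ ih1 ih2 =>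
      intro p
      have : (a :: s1 ++ b :: s2) = a :: (s1 ++ b :: s2) := by simp
      rw [this, List.foldl_cons]
      rw [List.foldl_append]
      simp only [umStep, ha]
      rw [ih1, List.foldl_cons]
      simp only [umStep, hb]
      simp [ih2]

lemma foldl_umStep_buildY {t : α → Kind} {ls : List (Lv α)}
    (h : ∀ l ∈ ls, t l.b = Kind.ret ∧ WellMatched t l.g) :
    ∀ c : ℕ, (buildY ls).foldl (umStep t) (c, 0) = (c + ls.length, 0) := by
  induction ls with
  | nil => intro c; simp
  | cons l r ih =>
      intro c
      obtain ⟨hb, hg⟩ := h l (by simp)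
      rw [buildY_cons, List.foldl_append, List.foldl_append,
        ih (fun l hl => h l (by simp [hl])) c, foldl_umStep_wm hg]
      simp [umStep, hb, List.length_cons]
      ring_nf

lemma foldl_umStep_buildH {t : α → Kind} {ls : List (Lv α)}
    (h : ∀ l ∈ ls, t l.a = Kind.call ∧ WellMatched t l.e) :
    ∀ c d : ℕ, (buildH ls).foldl (umStep t) (c, d) = (c, d + ls.length) := by
  induction ls with
  | nil => intro c d; simp
  | cons l r ih =>
      intro c d
      obtain ⟨ha, he⟩ := h l (by simp)
      rw [buildH_cons]
      simp only [List.foldl_cons, List.foldl_append]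
      simp only [umStep, ha]
      rw [foldl_umStep_wm he, ih (fun l hl => h l (by simp [hl]))]
      simp [List.length_cons]
      ring_nf

lemma derives_wm {N : Type} {t : α → Kind} {G : VPG α N t} {A : N} {s : List α}
    (h : G.Derives A s) : WellMatched t s := by
  induction h with
  | eps _ => exact WellMatched.nil
  | plain hp _ ih => exact WellMatched.plain (G.plain_ok hp) ih
  | nest hm _ _ ih1 ih2 =>
      exact WellMatched.nest (G.match_ok hm).1 (G.match_ok hm).2 ih1 ih2

/-- Where does a prefix `s` of `buildY ls ++ Z` end? -/
lemma buildY_split_prefix :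
    ∀ (ls : List (Lv α)) (Z s w2 : List α), buildY ls ++ Z = s ++ w2 →
    (∃ h h2, s = buildY ls ++ h ∧ Z = h ++ h2) ∨
    (∃ lsa lv lsb h h2, ls = lsa ++ lv :: lsb ∧ s = buildY lsb ++ h ∧ lv.g = h ++ h2) := by
  intro ls
  induction ls with
  | nil =>
      intro Z s w2 he
      exact Or.inl ⟨s, w2, by simp, by simpa using he⟩
  | cons lv rest ih =>
      intro Z s w2 he
      have he' : buildY rest ++ (lv.g ++ [lv.b] ++ Z) = s ++ w2 := by
        simpa [buildY_cons, List.append_assoc] using he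
      rcases ih (lv.g ++ [lv.b] ++ Z) s w2 he' with ⟨h, h2, hs, hz⟩ | ⟨lsa, lv', lsb, h, h2, h1, h2', h3⟩
      · -- s = buildY rest ++ h , lv.g ++ [lv.b] ++ Z = h ++ h2
        have hz' : lv.g ++ ([lv.b] ++ Z) = h ++ h2 := by simpa [List.append_assoc] using hz
        rcases List.append_eq_append_iff.mp hz' with ⟨m, hm1, hm2⟩ | ⟨m, hm1, hm2⟩
        · -- h = lv.g ++ m , [lv.b] ++ Z = m ++ h2
          match m, hm2 with
          | [], hm2 =>
              refine Or.inr ⟨[], lv, rest, h, [], by simp, hs, by simp [hm1]⟩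
          | b' :: m2, hm2 =>
              injection hm2 with f1 f2
              refine Or.inl ⟨m2, h2, ?_, f2⟩
              rw [hs, hm1, buildY_cons, ← f1]
              simp
        · -- lv.g = h ++ m , h2 = m ++ [lv.b] ++ Z
          exact Or.inr ⟨[], lv, rest, h, m, by simp, hs, hm1⟩
      · exact Or.inr ⟨lv :: lsa, lv', lsb, h, h2, by rw [h1]; rfl, h2', h3⟩

/-! ### Congruence pumping -/

lemma synCongr_trans' {L : Set (List α)} {A B r : List α}
    (h1 : SynCongr L A r) (h2 : SynCongr L B r) : SynCongr L A B :=
  fun u v => (h1 u v).trans (h2 u v).symm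

lemma pump_mem {L : Set (List α)} {A B X Y U Z : List α}
    (hcong : SynCongr L A B) (hsplit : A = X ++ B ++ Y)
    (hbase : U ++ A ++ Z ∈ L) :
    ∀ k, 1 ≤ k → U ++ lpow X k ++ B ++ lpow Y k ++ Z ∈ L := by
  intro k hk
  induction k with
  | zero => omega
  | succ k ih =>
      match k, ih with
      | 0, _ =>
          simpa [lpow_one, hsplit, List.append_assoc] using hbase
      | k+1, ih =>
          have hmem := ih (by omega)
          have h2 := (hcong (U ++ lpow X (k+1)) (lpow Y (k+1) ++ Z)).mpr
            (by simpa [List.append_assoc] using hmem)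
          rw [hsplit] at h2
          have hx : lpow X (k+1+1) = lpow X (k+1) ++ X := by
            rw [lpow_succ]
            simpa using lpow_rot X [] (k+1)
          have hy : lpow Y (k+1+1) = Y ++ lpow Y (k+1) := lpow_succ Y (k+1)
          have heq : U ++ lpow X (k+1+1) ++ B ++ lpow Y (k+1+1) ++ Z =
              U ++ lpow X (k+1) ++ (X ++ B ++ Y) ++ (lpow Y (k+1) ++ Z) := by
            rw [hx, hy]
            simp [List.append_assoc]
          rw [heq]
          exact h2

/-! ### Pattern lemmas -/

section Pattern

variable {tO t : α → Kind} {L : Set (List α)} {U X B Y Z : List α} {γ : ℕ}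

lemma pump_nonmem (hLwm : ∀ W ∈ L, WellMatched tO W)
    (hX : bal tO X = (γ : ℤ)) (hY : bal tO Y = -(γ : ℤ)) (hγ : 1 ≤ γ)
    (hbase : U ++ X ++ B ++ Y ++ Z ∈ L) :
    ∀ k j, k ≠ j → U ++ lpow X k ++ B ++ lpow Y j ++ Z ∉ L := by
  intro k j hkj hmem
  have h0 : bal tO (U ++ X ++ B ++ Y ++ Z) = 0 := wm_bal (hLwm _ hbase)
  have h1 : bal tO (U ++ lpow X k ++ B ++ lpow Y j ++ Z) = 0 := wm_bal (hLwm _ hmem)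
  simp only [bal_append, bal_lpow, hX, hY] at h0 h1
  have h3 : ((k : ℤ) - (j : ℤ)) * (γ : ℤ) = 0 := by linear_combination h1 - h0
  rcases mul_eq_zero.mp h3 with h | h
  · have : (k : ℤ) = j := by omega
    exact hkj (by exact_mod_cast this)
  · omega

lemma pump_balX_nonneg (hLt : ∀ W ∈ L, WellMatched t W)
    (hmem : ∀ k, 1 ≤ k → U ++ lpow X k ++ B ++ lpow Y k ++ Z ∈ L) :
    0 ≤ bal t X := by
  by_contra hneg
  push_neg at hneg
  have hXle : bal t X ≤ -1 := by omega
  have hU : 0 ≤ bal t U := by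
    have := hLt _ (hmem 1 le_rfl)
    exact wm_prefix_bal this U (lpow X 1 ++ B ++ lpow Y 1 ++ Z) (by simp [List.append_assoc])
  set k := (bal t U).toNat + 1 with hk
  have hm := hLt _ (hmem k (by omega))
  have hpre := wm_prefix_bal hm (U ++ lpow X k) (B ++ lpow Y k ++ Z) (by simp [List.append_assoc])
  rw [bal_append, bal_lpow] at hpre
  have hcast : (k : ℤ) = (bal t U).toNat + 1 := by exact_mod_cast rfl
  have : (k : ℤ) * bal t X ≤ -(k : ℤ) := by
    have := mul_le_mul_of_nonneg_left hXle (by positivity : (0:ℤ) ≤ (k:ℤ))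
    linarith
  have hUk : bal t U < (k : ℤ) := by
    rw [hcast]
    omega
  linarith

lemma pump_balY_nonpos (hLt : ∀ W ∈ L, WellMatched t W)
    (hmem : ∀ k, 1 ≤ k → U ++ lpow X k ++ B ++ lpow Y k ++ Z ∈ L) :
    bal t Y ≤ 0 := by
  by_contra hpos
  push_neg at hpos
  have hYge : 1 ≤ bal t Y := by omega
  have hZ : bal t Z ≤ 0 := by
    have := hLt _ (hmem 1 le_rfl)
    exact wm_suffix_bal this (U ++ lpow X 1 ++ B ++ lpow Y 1) Z (by simp [List.append_assoc])
  set k := (-(bal t Z)).toNat + 1 with hk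
  have hm := hLt _ (hmem k (by omega))
  have hsuf := wm_suffix_bal hm (U ++ lpow X k ++ B) (lpow Y k ++ Z) (by simp [List.append_assoc])
  rw [bal_append, bal_lpow] at hsuf
  have hcast : (k : ℤ) = (-(bal t Z)).toNat + 1 := by exact_mod_cast rfl
  have h1 : (k : ℤ) ≤ (k : ℤ) * bal t Y := by
    nlinarith [hYge, (by positivity : (0:ℤ) ≤ (k:ℤ))]
  have h2 : -(bal t Z) < (k : ℤ) := by rw [hcast]; omega
  linarith

lemma lpow_comm (x : List α) (k : ℕ) : x ++ lpow x k = lpow x k ++ x := by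
  simpa using lpow_rot x [] k

lemma lpow_rot2 (x1 x2 : List α) (k : ℕ) :
    x1 ++ lpow (x2 ++ x1) k ++ x2 = lpow (x1 ++ x2) (k + 1) := by
  rw [lpow_rot, lpow_succ, lpow_comm]
  simp [List.append_assoc]

/-- Call-side: equal heights lead to a contradiction with compatibility. -/
lemma callside_eq_false (hcomp : Compatible t L)
    (hbalX : bal t X = 0) (hXne : X ≠ []) (hYne : Y ≠ [])
    (hmem : ∀ k, 1 ≤ k → U ++ lpow X k ++ B ++ lpow Y k ++ Z ∈ L)
    (hnonmem : ∀ k j, k ≠ j → U ++ lpow X k ++ B ++ lpow Y j ++ Z ∉ L) : False := by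
  obtain ⟨x1, x2, hx12, hrot⟩ := wm_rotation hbalX
  have hid : ∀ k, (U ++ x1) ++ lpow (x2 ++ x1) k ++ (x2 ++ B ++ Y) ++ lpow Y k ++ Z =
      U ++ lpow X (k+1) ++ B ++ lpow Y (k+1) ++ Z := by
    intro k
    rw [hx12, ← lpow_rot2 x1 x2 k, lpow_succ]
    simp [List.append_assoc]
  have hpat : NestingPattern L (U ++ x1) (x2 ++ x1) (x2 ++ B ++ Y) Y Z := by
    refine ⟨?_, hYne, ?_, ?_⟩
    · intro h
      apply hXne
      have : x1 = [] ∧ x2 = [] := by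
        constructor
        · rcases List.append_eq_nil_iff.mp h with ⟨h2, h1⟩; exact h1
        · rcases List.append_eq_nil_iff.mp h with ⟨h2, h1⟩; exact h2
      rw [hx12, this.1, this.2]; rfl
    · intro k hk
      rw [hid k]
      exact hmem (k+1) (by omega)
    · intro k j hkj
      rw [show (U ++ x1) ++ lpow (x2 ++ x1) k ++ (x2 ++ B ++ Y) ++ lpow Y j ++ Z =
          U ++ lpow X (k+1) ++ B ++ lpow Y (j+1) ++ Z by
        rw [hx12, ← lpow_rot2 x1 x2 k, lpow_succ]
        simp [List.append_assoc]]
      exact hnonmem (k+1) (j+1) (by omega)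
  have hseed : (U ++ x1) ++ (x2 ++ x1) ++ (x2 ++ B ++ Y) ++ Y ++ Z ∈ L := by
    have := hmem 2 (by omega)
    have h2 : (U ++ x1) ++ lpow (x2 ++ x1) 1 ++ (x2 ++ B ++ Y) ++ lpow Y 1 ++ Z =
        U ++ lpow X 2 ++ B ++ lpow Y 2 ++ Z := hid 1
    simp only [lpow_one] at h2
    rw [h2]
    exact this
  have hpc := hcomp.2 (U ++ x1) (x2 ++ x1) (x2 ++ B ++ Y) Y Z hseed hpat
  exact wm_not_unmatchedCallIn hrot hpc.1

/-- Ret-side: equal heights lead to a contradiction with compatibility. -/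
lemma retside_eq_false (hcomp : Compatible t L)
    (hbalY : bal t Y = 0) (hXne : X ≠ []) (hYne : Y ≠ [])
    (hmem : ∀ k, 1 ≤ k → U ++ lpow X k ++ B ++ lpow Y k ++ Z ∈ L)
    (hnonmem : ∀ k j, k ≠ j → U ++ lpow X k ++ B ++ lpow Y j ++ Z ∉ L) : False := by
  obtain ⟨y1, y2, hy12, hrot⟩ := wm_rotation hbalY
  have hid : ∀ k j, U ++ lpow X k ++ (X ++ B ++ y1) ++ lpow (y2 ++ y1) j ++ (y2 ++ Z) =
      U ++ lpow X (k+1) ++ B ++ lpow Y (j+1) ++ Z := by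
    intro k j
    rw [hy12, ← lpow_rot2 y1 y2 j, lpow_succ, lpow_comm]
    simp [List.append_assoc]
  have hpat : NestingPattern L U X (X ++ B ++ y1) (y2 ++ y1) (y2 ++ Z) := by
    refine ⟨hXne, ?_, ?_, ?_⟩
    · intro h
      apply hYne
      rcases List.append_eq_nil_iff.mp h with ⟨h2, h1⟩
      rw [hy12, h1, h2]; rfl
    · intro k hk
      rw [hid k k]
      exact hmem (k+1) (by omega)
    · intro k j hkj
      rw [hid k j]
      exact hnonmem (k+1) (j+1) (by omega)
  have hseed : U ++ X ++ (X ++ B ++ y1) ++ (y2 ++ y1) ++ (y2 ++ Z) ∈ L := by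
    have h2 := hid 1 1
    simp only [lpow_one] at h2
    rw [h2]
    exact hmem 2 (by omega)
  have hpc := hcomp.2 U X (X ++ B ++ y1) (y2 ++ y1) (y2 ++ Z) hseed hpat
  exact wm_not_unmatchedRetIn hrot hpc.2

end Pattern

/-! ### Combinatorial lemma -/

lemma comb {β : Type} (R : Finset β) (Bd : ℕ) (q : ℕ) (σ : ℕ → ℤ) (cls : ℕ → β)
    (hcls : ∀ n, n < q → cls n ∈ R)
    (h0 : ∀ n, n < q → 0 ≤ σ n)
    (hlast : 1 ≤ q → σ (q - 1) ≤ (Bd : ℤ))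
    (hstep : ∀ n, n + 1 < q → σ n - σ (n + 1) ≤ (Bd : ℤ))
    (hmono : ∀ n n', n < n' → n' < q → cls n = cls n' → σ n < σ n') :
    q ≤ R.card * (Bd + (R.card + 1) * (Bd + 1) + 1) := by
  classical
  set c := R.card with hc
  set Hmax : ℕ := Bd + (c + 1) * (Bd + 1) with hH
  -- Step 1: all heights are bounded by Hmax
  have hbound : ∀ n, n < q → σ n ≤ (Hmax : ℤ) := by
    intro n hn
    by_contra hgt
    push_neg at hgt
    have hq1 : 1 ≤ q := by omega
    have hlast' := hlast hq1
    have hnne : n ≠ q - 1 := by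
      intro h
      rw [h] at hgt
      have : (Bd : ℤ) ≤ (Hmax : ℤ) := by
        have : Bd ≤ Hmax := by rw [hH]; nlinarith
        exact_mod_cast this
      omega
    -- levels
    have hexJ : ∀ l : ℕ, ∃ j, n ≤ j ∧ j < q ∧ σ j ≤ (Bd : ℤ) + l * ((Bd : ℤ) + 1) := by
      intro l
      refine ⟨q - 1, by omega, by omega, ?_⟩
      have : (0:ℤ) ≤ l * ((Bd : ℤ) + 1) := by positivity
      omega
    let J : ℕ → ℕ := fun l => Nat.find (hexJ l)
    have hJspec : ∀ l, n ≤ J l ∧ J l < q ∧ σ (J l) ≤ (Bd : ℤ) + l * ((Bd : ℤ) + 1) :=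
      fun l => Nat.find_spec (hexJ l)
    have hJmin : ∀ l j, j < J l → ¬(n ≤ j ∧ j < q ∧ σ j ≤ (Bd : ℤ) + l * ((Bd : ℤ) + 1)) :=
      fun l j hj => Nat.find_min (hexJ l) hj
    have hvlt : ∀ l : ℕ, l ≤ c → (Bd : ℤ) + l * ((Bd : ℤ) + 1) < σ n := by
      intro l hl
      have h1 : (Bd : ℤ) + l * ((Bd : ℤ) + 1) ≤ (Bd : ℤ) + c * ((Bd : ℤ) + 1) := by
        have : (l : ℤ) ≤ (c : ℤ) := by exact_mod_cast hl
        nlinarith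
      have h2 : (Hmax : ℤ) = (Bd : ℤ) + ((c : ℤ) + 1) * ((Bd : ℤ) + 1) := by
        rw [hH]; push_cast; ring
      nlinarith
    have hJgt : ∀ l : ℕ, l ≤ c → n < J l := by
      intro l hl
      rcases Nat.lt_or_ge n (J l) with h | h
      · exact h
      · exfalso
        have hs := hJspec l
        have : J l = n ∨ J l < n := by omega
        rcases this with h' | h'
        · rw [h'] at hs
          have := hvlt l hl
          omega
        · omega
    have hband : ∀ l : ℕ, l ≤ c → (Bd : ℤ) + l * ((Bd : ℤ) + 1) - Bd < σ (J l) := by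
      intro l hl
      have hJl := hJspec l
      have hmin := hJmin l (J l - 1) (by have := hJgt l hl; omega)
      push_neg at hmin
      have h1 : n ≤ J l - 1 := by have := hJgt l hl; omega
      have h2 : J l - 1 < q := by omega
      have h3 : (Bd : ℤ) + l * ((Bd : ℤ) + 1) < σ (J l - 1) := by
        have := hmin h1 h2
        omega
      have h4 := hstep (J l - 1) (by have := hJgt l hl; omega)
      have h5 : J l - 1 + 1 = J l := by have := hJgt l hl; omega
      rw [h5] at h4
      omega
    have hJlt : ∀ l l' : ℕ, l < l' → l' ≤ c → J l' < J l ∧ σ (J l) < σ (J l') := by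
      intro l l' hll hl'
      have hσl := (hJspec l).2.2
      have hσl' : (Bd : ℤ) + l' * ((Bd : ℤ) + 1) - Bd < σ (J l') := hband l' hl'
      have hv : (Bd : ℤ) + l * ((Bd : ℤ) + 1) < (Bd : ℤ) + l' * ((Bd : ℤ) + 1) - Bd := by
        have : (l : ℤ) + 1 ≤ (l' : ℤ) := by exact_mod_cast hll
        nlinarith
      have hσ : σ (J l) < σ (J l') := by omega
      have hle : J l' ≤ J l := by
        by_contra hcon
        push_neg at hcon
        exact hJmin l' (J l) hcon ⟨(hJspec l).1, (hJspec l).2.1, by omega⟩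
      have hne : J l' ≠ J l := by
        intro h
        rw [h] at hσ
        omega
      exact ⟨by omega, hσ⟩
    -- injectivity into R
    have hinj : Set.InjOn (fun l => cls (J l)) (Finset.range (c + 1)) := by
      intro l hl l' hl' heq
      simp only [Finset.coe_range, Set.mem_Iio] at hl hl'
      by_contra hne
      rcases Nat.lt_or_ge l l' with h | h
      · obtain ⟨hJ, hσ⟩ := hJlt l l' h (by omega)
        exact absurd (hmono (J l') (J l) hJ (hJspec l).2.1 heq.symm) (by omega)
      · have h' : l' < l := by omega
        obtain ⟨hJ, hσ⟩ := hJlt l' l h' (by omega)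
        exact absurd (hmono (J l) (J l') hJ (hJspec l').2.1 heq) (by omega)
    have hmaps : ∀ l ∈ Finset.range (c + 1), cls (J l) ∈ R := by
      intro l hl
      exact hcls (J l) (hJspec l).2.1
    have hcard := Finset.card_le_card_of_injOn _ hmaps hinj
    rw [Finset.card_range] at hcard
    omega
  -- Step 2: pigeonhole on (class, height)
  by_contra hq
  push_neg at hq
  have hmapsto : ∀ n ∈ Finset.range q, (cls n, (σ n).toNat) ∈ R ×ˢ Finset.range (Hmax + 1) := by
    intro n hn
    simp only [Finset.mem_range] at hn
    refine Finset.mem_product.mpr ⟨hcls n hn, ?_⟩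
    simp only [Finset.mem_range]
    have h1 := hbound n hn
    have h2 := h0 n hn
    omega
  have hcard : (R ×ˢ Finset.range (Hmax + 1)).card < (Finset.range q).card := by
    rw [Finset.card_product, Finset.card_range, Finset.card_range]
    calc c * (Hmax + 1) = c * (Bd + (c + 1) * (Bd + 1) + 1) := by rw [hH]
    _ < q := hq
  obtain ⟨n, hn, n', hn', hne, heq⟩ :=
    Finset.exists_ne_map_eq_of_card_lt_of_maps_to hcard hmapsto
  simp only [Finset.mem_range] at hn hn'
  have hclseq : cls n = cls n' := congrArg Prod.fst heq
  have hσeq : σ n = σ n' := by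
    have h1 := congrArg Prod.snd heq
    simp only at h1
    have := h0 n hn
    have := h0 n' hn'
    omega
  rcases Nat.lt_or_ge n n' with h | h
  · have := hmono n n' h hn' hclseq
    omega
  · have h' : n' < n := by omega
    have := hmono n' n h' hn hclseq.symm
    omega

/-! ### Rigidity and span contexts -/

section Spans

variable {tO t : α → Kind} {L : Set (List α)} {R : Finset (List α)}

lemma rigidity (hR : ∀ s, WellMatched tO s → ∃ r ∈ R, WellMatched tO r ∧ SynCongr L s r)
    (hLt : ∀ W ∈ L, WellMatched t W)
    {P u v : List α} (hP : WellMatched tO P) (hmem : u ++ P ++ v ∈ L) :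
    (bal t P).natAbs ≤ R.sup (fun r => (bal t r).natAbs) := by
  obtain ⟨r, hrR, hrwm, hcong⟩ := hR P hP
  have h2 : u ++ r ++ v ∈ L := (hcong u v).mp hmem
  have e1 : bal t (u ++ P ++ v) = 0 := wm_bal (hLt _ hmem)
  have e2 : bal t (u ++ r ++ v) = 0 := wm_bal (hLt _ h2)
  simp only [bal_append] at e1 e2
  have heq : bal t P = bal t r := by omega
  rw [heq]
  exact Finset.le_sup (f := fun r => (bal t r).natAbs) hrR

lemma balO_buildH {ls : List (Lv α)} (h : ∀ l ∈ ls, LvOK tO l) :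
    bal tO (buildH ls) = (ls.length : ℤ) := by
  induction ls with
  | nil => simp
  | cons l r ih =>
      obtain ⟨ha, hb, he, hg⟩ := h l (by simp)
      rw [buildH_cons]
      simp [ha, kv, wm_bal he, ih (fun l hl => h l (by simp [hl]))]
      ring

lemma balO_buildY {ls : List (Lv α)} (h : ∀ l ∈ ls, LvOK tO l) :
    bal tO (buildY ls) = -(ls.length : ℤ) := by
  induction ls with
  | nil => simp
  | cons l r ih =>
      obtain ⟨ha, hb, he, hg⟩ := h l (by simp)
      rw [buildY_cons]
      simp [hb, kv, wm_bal hg, ih (fun l hl => h l (by simp [hl]))]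
      ring

lemma ls_decomp {ls : List (Lv α)} {i : ℕ} (hi : i < ls.length) :
    ls.drop i = ls[i] :: ls.drop (i + 1) := List.drop_eq_getElem_cons hi

lemma W_span_eq {pre post : List α} {ls : List (Lv α)} (i : ℕ) :
    pre ++ buildV ls ++ post =
      (pre ++ buildH (ls.take i)) ++ buildV (ls.drop i) ++ (buildY (ls.take i) ++ post) := by
  conv_lhs => rw [← List.take_append_drop i ls]
  rw [buildV_split]
  simp [List.append_assoc]

lemma W_e_eq {pre post : List α} {ls : List (Lv α)} {i : ℕ} (hi : i < ls.length) :
    pre ++ buildV ls ++ post =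
      (pre ++ buildH (ls.take i) ++ [ls[i].a]) ++ ls[i].e ++
        (buildV (ls.drop (i+1)) ++ ls[i].g ++ [ls[i].b] ++ buildY (ls.take i) ++ post) := by
  rw [W_span_eq i, ls_decomp hi, buildV_cons]
  simp [List.append_assoc]

lemma W_g_eq {pre post : List α} {ls : List (Lv α)} {i : ℕ} (hi : i < ls.length) :
    pre ++ buildV ls ++ post =
      (pre ++ buildH (ls.take i) ++ ls[i].a :: ls[i].e ++ buildV (ls.drop (i+1))) ++ ls[i].g ++
        ([ls[i].b] ++ buildY (ls.take i) ++ post) := by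
  rw [W_span_eq i, ls_decomp hi, buildV_cons]
  simp [List.append_assoc]

lemma drop_split {ls : List (Lv α)} {i i' : ℕ} (hii : i ≤ i') :
    ls.drop i = (ls.drop i).take (i' - i) ++ ls.drop i' := by
  conv_lhs => rw [← List.take_append_drop (i' - i) (ls.drop i)]
  rw [List.drop_drop]
  congr 2
  omega

lemma mid_length {ls : List (Lv α)} {i i' : ℕ} (hii : i ≤ i') (hi' : i' ≤ ls.length) :
    ((ls.drop i).take (i' - i)).length = i' - i := by
  simp
  omega

/-- The core pumping setup for a congruent pair of nested spans. -/
lemma span_pump (hLwm : ∀ W ∈ L, WellMatched tO W)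
    {W pre post : List α} {ls : List (Lv α)}
    (hWL : W ∈ L) (hWeq : W = pre ++ buildV ls ++ post)
    (hlv : ∀ l ∈ ls, LvOK tO l)
    {i i' : ℕ} (hii : i < i') (hi' : i' ≤ ls.length)
    (hcong : SynCongr L (buildV (ls.drop i)) (buildV (ls.drop i'))) :
    (∀ k, 1 ≤ k → (pre ++ buildH (ls.take i)) ++ lpow (buildH ((ls.drop i).take (i' - i))) k ++
        buildV (ls.drop i') ++ lpow (buildY ((ls.drop i).take (i' - i))) k ++
        (buildY (ls.take i) ++ post) ∈ L) ∧
    (∀ k j, k ≠ j → (pre ++ buildH (ls.take i)) ++ lpow (buildH ((ls.drop i).take (i' - i))) k ++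
        buildV (ls.drop i') ++ lpow (buildY ((ls.drop i).take (i' - i))) j ++
        (buildY (ls.take i) ++ post) ∉ L) ∧
    buildH ((ls.drop i).take (i' - i)) ≠ [] ∧
    buildY ((ls.drop i).take (i' - i)) ≠ [] := by
  set mid := (ls.drop i).take (i' - i) with hmid
  have hmidlv : ∀ l ∈ mid, LvOK tO l := fun l hl =>
    hlv l (List.mem_of_mem_drop (List.mem_of_mem_take hl))
  have hmidlen : mid.length = i' - i := mid_length (le_of_lt hii) hi'
  have hsplit : buildV (ls.drop i) = buildH mid ++ buildV (ls.drop i') ++ buildY mid := by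
    conv_lhs => rw [drop_split (le_of_lt hii), buildV_split]
  have hbase : (pre ++ buildH (ls.take i)) ++ buildV (ls.drop i) ++
      (buildY (ls.take i) ++ post) ∈ L := by
    rw [← W_span_eq i, ← hWeq]; exact hWL
  have hmem := pump_mem hcong hsplit hbase
  have hγ : 1 ≤ i' - i := by omega
  have hbX : bal tO (buildH mid) = ((i' - i : ℕ) : ℤ) := by
    rw [balO_buildH hmidlv, hmidlen]
  have hbY : bal tO (buildY mid) = -((i' - i : ℕ) : ℤ) := by
    rw [balO_buildY hmidlv, hmidlen]
  have hbase' : (pre ++ buildH (ls.take i)) ++ buildH mid ++ buildV (ls.drop i') ++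
      buildY mid ++ (buildY (ls.take i) ++ post) ∈ L := by
    have := hmem 1 le_rfl
    simpa [List.append_assoc] using this
  have hnonmem := pump_nonmem hLwm hbX hbY hγ hbase'
  have hmidne : mid ≠ [] := by
    intro h
    rw [h] at hmidlen
    simp at hmidlen
    omega
  refine ⟨hmem, hnonmem, ?_, ?_⟩
  · match mid, hmidne with
    | l :: r, _ => rw [buildH_cons]; simp
  · match mid, hmidne with
    | l :: r, _ => rw [buildY_cons]; simp

end Spans

/-! ### Side bounds -/

def Nbound (t : α → Kind) (R : Finset (List α)) : ℕ :=
  R.card * ((R.sup (fun r => (bal t r).natAbs) + 1) +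
    (R.card + 1) * ((R.sup (fun r => (bal t r).natAbs) + 1) + 1) + 1)

section SideBounds

variable {tO t : α → Kind} {L : Set (List α)} {R : Finset (List α)}

lemma call_side_bound
    (hR : ∀ s, WellMatched tO s → ∃ r ∈ R, WellMatched tO r ∧ SynCongr L s r)
    (hLwm : ∀ W ∈ L, WellMatched tO W)
    (hcomp : Compatible t L)
    {W pre post : List α} {ls : List (Lv α)}
    (hWL : W ∈ L) (hWeq : W = pre ++ buildV ls ++ post)
    (hlv : ∀ l ∈ ls, LvOK tO l)
    {w0 sp s : List α} (hswm : WellMatched t s)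
    (hs : s = sp ++ buildH ls) (hpre : pre = w0 ++ sp) :
    ls.length ≤ Nbound t R := by
  classical
  set C : ℕ := R.sup (fun r => (bal t r).natAbs) with hC
  set σ : ℕ → ℤ := fun n => bal t (sp ++ buildH (ls.take n)) with hσ
  have hVwm : ∀ n : ℕ, WellMatched tO (buildV (ls.drop n)) := fun n =>
    wm_buildV (fun l hl => hlv l (List.mem_of_mem_drop hl))
  set cls : ℕ → List α := fun n => Classical.choose (hR _ (hVwm n)) with hcls
  have hclsspec : ∀ n, cls n ∈ R ∧ WellMatched tO (cls n) ∧
      SynCongr L (buildV (ls.drop n)) (cls n) := by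
    intro n
    obtain ⟨h1, h2, h3⟩ := Classical.choose_spec (hR _ (hVwm n))
    exact ⟨h1, h2, h3⟩
  have h0 : ∀ n, n < ls.length → 0 ≤ σ n := by
    intro n _
    refine wm_prefix_bal hswm _ (buildH (ls.drop n)) ?_
    rw [hs]
    conv_lhs => rw [← List.take_append_drop n ls, buildH_append]
    simp [List.append_assoc]
  have htakes : ∀ n (hn : n < ls.length), ls.take (n+1) = ls.take n ++ [ls[n]] := by
    intro n hn
    rw [List.take_succ]
    simp [List.getElem?_eq_getElem hn]
  have hσsucc : ∀ n (hn : n < ls.length), σ (n+1) = σ n + kv (t ls[n].a) + bal t ls[n].e := by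
    intro n hn
    simp only [hσ]
    rw [htakes n hn, buildH_append]
    simp [buildH_cons]
    ring
  have hestep : ∀ n (hn : n < ls.length), (bal t ls[n].e).natAbs ≤ C := by
    intro n hn
    have hew : WellMatched tO ls[n].e := (hlv _ (List.getElem_mem hn)).2.2.1
    have hctx := W_e_eq (pre := pre) (post := post) (ls := ls) hn
    exact rigidity hR hcomp.1 hew (by rw [← hctx, ← hWeq]; exact hWL)
  have hlast : 1 ≤ ls.length → σ (ls.length-1) ≤ ((C : ℤ) + 1) := by
    intro hq1
    have hn : ls.length - 1 < ls.length := by omega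
    have hbal0 : bal t s = 0 := wm_bal hswm
    have hseq : s = (sp ++ buildH (ls.take (ls.length-1))) ++ (ls[ls.length-1].a :: ls[ls.length-1].e) := by
      rw [hs]
      conv_lhs => rw [← List.take_append_drop (ls.length-1) ls, buildH_append]
      rw [ls_decomp hn]
      have hdq : ls.drop (ls.length - 1 + 1) = [] := by
        apply List.drop_eq_nil_of_le
        omega
      rw [hdq]
      simp [buildH_cons, List.append_assoc]
    rw [hseq] at hbal0
    simp only [bal_append, bal_cons] at hbal0
    have h1 := hestep (ls.length-1) hn
    have h2 := kv_ge (t ls[ls.length-1].a)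
    simp only [hσ, bal_append]
    omega
  have hstep : ∀ n, n + 1 < ls.length → σ n - σ (n+1) ≤ ((C : ℤ) + 1) := by
    intro n hn
    have h1 := hσsucc n (by omega)
    have h2 := hestep n (by omega)
    have h3 := kv_ge (t ls[n].a)
    omega
  have hmono : ∀ n n', n < n' → n' < ls.length → cls n = cls n' → σ n < σ n' := by
    intro n n' hnn hn' hcl
    have hcong : SynCongr L (buildV (ls.drop n)) (buildV (ls.drop n')) := by
      refine synCongr_trans' ((hclsspec n).2.2) ?_
      have h2 := (hclsspec n').2.2
      rw [← hcl] at h2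
      exact h2
    obtain ⟨hmem, hnonmem, hXne, hYne⟩ :=
      span_pump hLwm hWL hWeq hlv hnn (le_of_lt hn') hcong
    have hbalX : bal t (buildH ((ls.drop n).take (n' - n))) = σ n' - σ n := by
      have htk : ls.take n' = ls.take n ++ (ls.drop n).take (n' - n) := by
        conv_lhs => rw [show n' = n + (n' - n) from by omega]
        rw [List.take_add]
      simp only [hσ]
      rw [htk, buildH_append]
      simp [bal_append] <;> ring
    have hge := pump_balX_nonneg hcomp.1 hmem
    have hne0 : bal t (buildH ((ls.drop n).take (n' - n))) ≠ 0 := by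
      intro h0
      exact callside_eq_false hcomp h0 hXne hYne hmem hnonmem
    omega
  have hcomb := comb R (C+1) ls.length σ cls (fun n hn => (hclsspec n).1) h0
    (fun h => by exact_mod_cast hlast h)
    (fun n hn => by exact_mod_cast hstep n hn) hmono
  simpa [Nbound, hC] using hcomb

lemma ret_side_bound
    (hR : ∀ s, WellMatched tO s → ∃ r ∈ R, WellMatched tO r ∧ SynCongr L s r)
    (hLwm : ∀ W ∈ L, WellMatched tO W)
    (hcomp : Compatible t L)
    {W pre post : List α} {ls : List (Lv α)}
    (hWL : W ∈ L) (hWeq : W = pre ++ buildV ls ++ post)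
    (hlv : ∀ l ∈ ls, LvOK tO l)
    {lsb : List (Lv α)} {base : ℕ} (hbase : lsb = ls.drop base)
    {s stail : List α} (hswm : WellMatched t s) (hs : s = buildY lsb ++ stail) :
    lsb.length ≤ Nbound t R := by
  classical
  by_cases hble : base ≤ ls.length
  case neg =>
    have : lsb = [] := by
      rw [hbase]
      apply List.drop_eq_nil_of_le
      omega
    simp [this, Nbound]
  set C : ℕ := R.sup (fun r => (bal t r).natAbs) with hC
  have hqlen : base + lsb.length = ls.length := by
    rw [hbase, List.length_drop]
    omega
  have hdrops : ∀ n, lsb.drop n = ls.drop (base + n) := by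
    intro n
    rw [hbase, List.drop_drop]
  have hgets : ∀ n (hn : n < lsb.length), lsb[n] = ls[base + n]'(by omega) := by
    intro n hn
    have h1 : lsb.drop n = ls.drop (base + n) := hdrops n
    have h3 : base + n < ls.length := by omega
    rw [ls_decomp hn, ls_decomp h3] at h1
    injection h1
  set σ : ℕ → ℤ := fun n => bal t (buildY (lsb.drop n)) with hσ
  have hVwm : ∀ n : ℕ, WellMatched tO (buildV (ls.drop n)) := fun n =>
    wm_buildV (fun l hl => hlv l (List.mem_of_mem_drop hl))
  set cls : ℕ → List α := fun n => Classical.choose (hR _ (hVwm (base + n))) with hcls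
  have hclsspec : ∀ n, cls n ∈ R ∧ WellMatched tO (cls n) ∧
      SynCongr L (buildV (ls.drop (base + n))) (cls n) := by
    intro n
    obtain ⟨h1, h2, h3⟩ := Classical.choose_spec (hR _ (hVwm (base + n)))
    exact ⟨h1, h2, h3⟩
  have h0 : ∀ n, n < lsb.length → 0 ≤ σ n := by
    intro n _
    refine wm_prefix_bal hswm _ (buildY (lsb.take n) ++ stail) ?_
    rw [hs]
    conv_lhs => rw [← List.take_append_drop n lsb, buildY_append]
    simp [List.append_assoc]
  have hlvb : ∀ l ∈ lsb, LvOK tO l := by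
    intro l hl
    rw [hbase] at hl
    exact hlv l (List.mem_of_mem_drop hl)
  have hdropsucc : ∀ n (hn : n < lsb.length), lsb.drop n = lsb[n] :: lsb.drop (n+1) := by
    intro n hn
    exact ls_decomp (by omega)
  have hσsucc : ∀ n (hn : n < lsb.length), σ n = σ (n+1) + bal t lsb[n].g + kv (t lsb[n].b) := by
    intro n hn
    simp only [hσ]
    rw [hdropsucc n hn, buildY_cons]
    simp
    ring
  have hgstep : ∀ n (hn : n < lsb.length), (bal t lsb[n].g).natAbs ≤ C := by
    intro n hn
    have hiq : base + n < ls.length := by omega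
    have hgw : WellMatched tO (ls[base + n]'hiq).g := (hlv _ (List.getElem_mem hiq)).2.2.2
    have hctx := W_g_eq (pre := pre) (post := post) (ls := ls) hiq
    have := rigidity hR hcomp.1 hgw (by rw [← hctx, ← hWeq]; exact hWL)
    rw [hgets n hn]
    exact this
  have hlast : 1 ≤ lsb.length → σ (lsb.length-1) ≤ ((C : ℤ) + 1) := by
    intro hq1
    have hn : lsb.length - 1 < lsb.length := by omega
    have h1 := hσsucc (lsb.length-1) hn
    have hend : lsb.drop (lsb.length - 1 + 1) = [] := by
      apply List.drop_eq_nil_of_le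
      omega
    have h2 : σ (lsb.length - 1 + 1) = 0 := by
      simp only [hσ]
      rw [hend]
      simp
    have h3 := hgstep (lsb.length-1) hn
    have h4 := kv_le (t lsb[lsb.length-1].b)
    omega
  have hstep : ∀ n, n + 1 < lsb.length → σ n - σ (n+1) ≤ ((C : ℤ) + 1) := by
    intro n hn
    have h1 := hσsucc n (by omega)
    have h2 := hgstep n (by omega)
    have h3 := kv_le (t lsb[n].b)
    have h4 := kv_ge (t lsb[n].b)
    omega
  have hmono : ∀ n n', n < n' → n' < lsb.length → cls n = cls n' → σ n < σ n' := by
    intro n n' hnn hn' hcl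
    have hcong : SynCongr L (buildV (ls.drop (base + n))) (buildV (ls.drop (base + n'))) := by
      refine synCongr_trans' ((hclsspec n).2.2) ?_
      have h2 := (hclsspec n').2.2
      rw [← hcl] at h2
      exact h2
    obtain ⟨hmem, hnonmem, hXne, hYne⟩ :=
      span_pump hLwm hWL hWeq hlv (show base + n < base + n' by omega)
        (show base + n' ≤ ls.length by omega) hcong
    have hbalY : bal t (buildY ((ls.drop (base + n)).take ((base + n') - (base + n)))) =
        σ n - σ n' := by
      have hds : ls.drop (base + n) =
          (ls.drop (base + n)).take ((base + n') - (base + n)) ++ ls.drop (base + n') := by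
        exact drop_split (by omega)
      have hY : buildY (ls.drop (base + n)) =
          buildY (ls.drop (base + n')) ++ buildY ((ls.drop (base + n)).take ((base + n') - (base + n))) := by
        conv_lhs => rw [hds]
        rw [buildY_append]
      simp only [hσ]
      rw [hdrops n, hdrops n', hY]
      simp [bal_append] <;> ring
    have hle := pump_balY_nonpos hcomp.1 hmem
    have hne0 : bal t (buildY ((ls.drop (base + n)).take ((base + n') - (base + n)))) ≠ 0 := by
      intro h0
      exact retside_eq_false hcomp h0 hXne hYne hmem hnonmem
    omega
  have hcomb := comb R (C+1) lsb.length σ cls (fun n hn => (hclsspec n).1) h0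
    (fun h => by exact_mod_cast hlast h)
    (fun n hn => by exact_mod_cast hstep n hn) hmono
  simpa [Nbound, hC] using hcomb

end SideBounds

end VStar

open VStar in
/-- for a compatible tagging `t`, `t`-well-matched strings
occurring in valid contexts have a bounded number of unmatched oracle symbols. -/
theorem bounded_unmatched_oracle_symbols {α : Type} (tO t : α → Kind)
    (L : Set (List α)) (hO : IsVPL tO L)
    (hfin : ∃ R : Finset (List α), ∀ s, WellMatched tO s →
      ∃ r ∈ R, WellMatched tO r ∧ SynCongr L s r)
    (hc : Compatible t L) :
    ∃ N : ℕ, 0 < N ∧ ∀ s w w' : List α, WellMatched t s →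
      w ++ s ++ w' ∈ L → unmatchedCount tO s ≤ N := by
  classical
  obtain ⟨nG, G, hLG⟩ := hO
  have hLwm : ∀ W ∈ L, WellMatched tO W := by
    intro W hW
    rw [hLG] at hW
    exact derives_wm hW
  obtain ⟨R, hR⟩ := hfin
  refine ⟨2 * Nbound t R + 1, by omega, ?_⟩
  intro s w w' hswm hmem
  set W := w ++ s ++ w' with hWdef
  have hWL : W ∈ L := hmem
  have hWwm : WellMatched tO W := hLwm _ hWL
  obtain ⟨d01, ls1, Z1, hw, hsw, hd01, hZ1, hlv1⟩ :=
    KR hWwm w (s ++ w') (by simp [hWdef, List.append_assoc])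
  have hWeq1 : W = d01 ++ buildV ls1 ++ Z1 := by
    rw [hWdef, List.append_assoc, hw, hsw, buildV_eq]
    simp [List.append_assoc]
  rcases buildY_split_prefix ls1 Z1 s w' hsw.symm with
    ⟨h, h2, hseq, hZsplit⟩ | ⟨lsa, lv, lsbv, h, h2, hls, hseq, hgsplit⟩
  · -- s ends inside Z1
    have hZ1wm : WellMatched tO Z1 := hZ1
    obtain ⟨d02, ls2, Z2, hh, hh2, hd02, hZ2, hlv2⟩ := KR hZ1wm h h2 hZsplit
    have hsfull : s = buildY ls1 ++ (d02 ++ buildH ls2) := by rw [hseq, hh]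
    -- ret side
    have hret : ls1.length ≤ Nbound t R := by
      refine ret_side_bound hR hLwm hc hWL hWeq1 hlv1 (lsb := ls1) (base := 0)
        (by simp) hswm hseq
    -- call side
    have hWeq2 : W = (d01 ++ buildV ls1 ++ d02) ++ buildV ls2 ++ (Z2 ++ []) := by
      rw [hWeq1, hZsplit, hh, hh2]
      simp [buildV_eq, List.append_assoc]
    have hcall : ls2.length ≤ Nbound t R := by
      refine call_side_bound hR hLwm hc hWL hWeq2 hlv2
        (w0 := d01 ++ buildH ls1) (sp := buildY ls1 ++ d02) hswm ?_ ?_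
      · rw [hsfull]; simp [List.append_assoc]
      · rw [buildV_eq]; simp [List.append_assoc]
    -- count
    have hcount : unmatchedCount tO s = ls1.length + ls2.length := by
      have hfold : s.foldl (umStep tO) (0, 0) = (ls1.length, ls2.length) := by
        rw [hsfull, List.foldl_append, List.foldl_append]
        rw [foldl_umStep_buildY (fun l hl => ⟨(hlv1 l hl).2.1, (hlv1 l hl).2.2.2⟩) 0]
        rw [foldl_umStep_wm hd02]
        rw [foldl_umStep_buildH (fun l hl => ⟨(hlv2 l hl).1, (hlv2 l hl).2.2.1⟩)]
        simp
      rw [unmatchedCount, hfold]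
    omega
  · -- s ends inside lv.g
    have hlvok : LvOK tO lv := hlv1 lv (by rw [hls]; simp)
    have hgwm : WellMatched tO lv.g := hlvok.2.2.2
    obtain ⟨d02, ls2, Z2, hh, hh2, hd02, hZ2, hlv2⟩ := KR hgwm h h2 hgsplit
    have hsfull : s = buildY lsbv ++ (d02 ++ buildH ls2) := by rw [hseq, hh]
    have hbase : lsbv = ls1.drop (lsa.length + 1) := by
      rw [hls]
      rw [show lsa ++ lv :: lsbv = (lsa ++ [lv]) ++ lsbv by simp]
      rw [List.drop_left']
      simp
    have hret : lsbv.length ≤ Nbound t R := by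
      exact ret_side_bound hR hLwm hc hWL hWeq1 hlv1 hbase hswm hseq
    have hWeq2 : W = (d01 ++ buildH lsa ++ (lv.a :: lv.e) ++ buildV lsbv ++ d02) ++
        buildV ls2 ++ (Z2 ++ [lv.b] ++ buildY lsa ++ Z1) := by
      rw [hWeq1, hls, buildV_split, buildV_cons, hgsplit, hh, hh2]
      simp [buildV_eq, List.append_assoc]
    have hcall : ls2.length ≤ Nbound t R := by
      refine call_side_bound hR hLwm hc hWL hWeq2 hlv2
        (w0 := d01 ++ buildH lsa ++ (lv.a :: lv.e) ++ buildH lsbv)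
        (sp := buildY lsbv ++ d02) hswm ?_ ?_
      · rw [hsfull]; simp [List.append_assoc]
      · rw [buildV_eq]; simp [List.append_assoc]
    have hcount : unmatchedCount tO s = lsbv.length + ls2.length := by
      have hlvb : ∀ l ∈ lsbv, LvOK tO l := by
        intro l hl
        exact hlv1 l (by rw [hls]; simp [hl])
      have hfold : s.foldl (umStep tO) (0, 0) = (lsbv.length, ls2.length) := by
        rw [hsfull, List.foldl_append, List.foldl_append]
        rw [foldl_umStep_buildY (fun l hl => ⟨(hlvb l hl).2.1, (hlvb l hl).2.2.2⟩) 0]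
        rw [foldl_umStep_wm hd02]
        rw [foldl_umStep_buildH (fun l hl => ⟨(hlv2 l hl).1, (hlv2 l hl).2.2.1⟩)]
        simp
      rw [unmatchedCount, hfold]
    omega
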